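/- arXiv:2103.15139 — 8 statements merged into one kernel-verified Lean document; each statement's English description precedes it below -/
import Mathlib

section
/- Let P be a poset and let U, V be Scott open subsets of P. Then U ≺ V in the complete lattice σ(P) of Scott open subsets of P (i.e., V lies in the interior of ↑U with respect to the upper topology on σ(P)) if and only if there exists a finite subset F of P such that U ⊆ ↑F ⊆ V. -/
open Topology TopologicalSpace Set

/-!
Basic neighbourhoods of `V` in the upper topology on `Opens P` are the sets `{W | ∀ Z ∈ t, W ≰ Z}`
with `t` finite and `V ≰ Z` for all `Z ∈ t`. Such a `t` is witnessed by finitely many points of `V`,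
one outside each `Z ∈ t`; conversely a finite `F ⊆ V` yields `t = {(closure {x})ᶜ | x ∈ F}`, since
`W ≤ (closure {x})ᶜ ↔ x ∉ W`. So `V ∈ interior (Ici U)` iff some finite `F ⊆ V` has `U` below every
open containing `F`. In the Scott topology `closure {p} = Iic p`, so opens are upper sets and `↑F` is
the intersection of the opens containing `F`, which turns this into `U ⊆ ↑F ⊆ V`.
-/

namespace Topology.IsUpper

variable {α : Type*} [Preorder α] [TopologicalSpace α] [IsUpper α]

theorem mem_interior_iff {s : Set α} {b : α} :
    b ∈ interior s ↔
      ∃ t : Set α, t.Finite ∧ b ∉ lowerClosure t ∧ (lowerClosure t : Set α)ᶜ ⊆ s := by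
  rw [mem_interior_iff_mem_nhds, IsUpper.isTopologicalBasis.mem_nhds_iff]
  constructor
  · rintro ⟨_, ⟨t, ht, rfl⟩, hb, hs⟩
    exact ⟨t, ht, hb, hs⟩
  · rintro ⟨t, ht, hb, hs⟩
    exact ⟨_, ⟨t, ht, rfl⟩, hb, hs⟩

end Topology.IsUpper

namespace TopologicalSpace.Opens

variable {X : Type*} [TopologicalSpace X]

def complClosureSingleton (x : X) : Opens X :=
  ⟨(closure {x})ᶜ, isClosed_closure.isOpen_compl⟩

theorem le_complClosureSingleton_iff {W : Opens X} {x : X} :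
    W ≤ complClosureSingleton x ↔ x ∉ W := by
  refine ⟨fun h hx => h hx (subset_closure rfl), fun hx => ?_⟩
  have : Disjoint (W : Set X) (closure {x}) :=
    (disjoint_singleton_right.2 hx).closure_right W.isOpen
  exact this.subset_compl_right

theorem notMem_lowerClosure_image_complClosureSingleton_iff {F : Set X} {W : Opens X} :
    W ∉ lowerClosure (complClosureSingleton '' F) ↔ F ⊆ W := by
  simp only [mem_lowerClosure, exists_mem_image, le_complClosureSingleton_iff, not_exists,
    not_and, not_not]
  rfl

theorem exists_finite_subset_forall_notMem_lowerClosure {t : Set (Opens X)} (ht : t.Finite)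
    {V : Opens X} (hV : V ∉ lowerClosure t) :
    ∃ F : Set X, F.Finite ∧ F ⊆ V ∧ ∀ W : Opens X, F ⊆ W → W ∉ lowerClosure t := by
  have hwit : ∀ Z ∈ t, ∃ x ∈ V, x ∉ Z := fun Z hZ =>
    SetLike.not_le_iff_exists.1 fun hVZ => hV (mem_lowerClosure.2 ⟨Z, hZ, hVZ⟩)
  choose x hxV hxZ using hwit
  have : Finite t := ht.to_subtype
  refine ⟨range fun Z : t => x Z Z.2, finite_range _, ?_, ?_⟩
  · rintro _ ⟨Z, rfl⟩
    exact hxV Z Z.2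
  · rintro W hFW hW
    obtain ⟨Z, hZ, hWZ⟩ := mem_lowerClosure.1 hW
    exact hxZ Z hZ (hWZ (hFW ⟨⟨Z, hZ⟩, rfl⟩))

variable [TopologicalSpace (Opens X)] [IsUpper (Opens X)]

theorem mem_interior_Ici_iff {U V : Opens X} :
    V ∈ interior (Ici U) ↔
      ∃ F : Set X, F.Finite ∧ F ⊆ V ∧ ∀ W : Opens X, F ⊆ W → U ≤ W := by
  rw [IsUpper.mem_interior_iff]
  constructor
  · rintro ⟨t, ht, hVt, htU⟩
    obtain ⟨F, hF, hFV, hFt⟩ := exists_finite_subset_forall_notMem_lowerClosure ht hVt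
    exact ⟨F, hF, hFV, fun W hFW => htU (hFt W hFW)⟩
  · rintro ⟨F, hF, hFV, hFU⟩
    refine ⟨_, hF.image complClosureSingleton, ?_, fun W hW => hFU W ?_⟩
    · exact notMem_lowerClosure_image_complClosureSingleton_iff.2 hFV
    · exact notMem_lowerClosure_image_complClosureSingleton_iff.1 hW

end TopologicalSpace.Opens

section ClosureSingletonEqIic

variable {P : Type*} [Preorder P] [TopologicalSpace P]

theorem TopologicalSpace.Opens.isUpperSet_of_closure_singleton_eq_Iic
    (hP : ∀ a : P, closure {a} = Iic a) (U : Opens P) :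
    IsUpperSet (U : Set P) := fun x y hxy hx => by
  have hxy : x ∈ closure {y} := hP y ▸ hxy
  obtain ⟨_, hy, rfl⟩ := mem_closure_iff.1 hxy U U.isOpen hx
  exact hy

theorem subset_upperClosure_iff_forall_opens_of_closure_singleton_eq_Iic
    (hP : ∀ a : P, closure {a} = Iic a) {F S : Set P} :
    S ⊆ upperClosure F ↔ ∀ W : Opens P, F ⊆ W → S ⊆ W := by
  refine ⟨fun hS W hFW => hS.trans (upperClosure_min hFW
    (Opens.isUpperSet_of_closure_singleton_eq_Iic hP W)), fun hS p hp => ?_⟩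
  by_contra hpF
  have hF : F ⊆ Opens.complClosureSingleton p := fun x hx hxp =>
    hpF (mem_upperClosure.2 ⟨x, hx, (hP p ▸ hxp : x ∈ Iic p)⟩)
  exact hS _ hF hp (subset_closure rfl)

end ClosureSingletonEqIic

/-- For Scott open sets `U`, `V` of a poset `P` (elements of the complete lattice `σ(P)`),
`U ≺ V` iff `V` lies in the interior of `↑U` with respect to the upper topology on `σ(P)`.
This is equivalent to the existence of a finite `F ⊆ P` with `U ⊆ ↑F ⊆ V`. -/
theorem scott_open_prec_iff_exists_finite_upperSet
    {P : Type*} [PartialOrder P] [TopologicalSpace P] [Topology.IsScott P Set.univ]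
    (U V : TopologicalSpace.Opens P) :
    V ∈ @interior (TopologicalSpace.Opens P) (Topology.upper (TopologicalSpace.Opens P))
        (Set.Ici U) ↔
      ∃ F : Set P, F.Finite ∧ (U : Set P) ⊆ ↑(upperClosure F) ∧
        (↑(upperClosure F) : Set P) ⊆ (V : Set P) := by
  let _ : TopologicalSpace (Opens P) := upper (Opens P)
  have : IsUpper (Opens P) := ⟨rfl⟩
  have hP : ∀ a : P, closure {a} = Iic a := fun a => IsScott.closure_singleton
  rw [Opens.mem_interior_Ici_iff]
  refine exists_congr fun F => and_congr_right fun _ => ?_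
  rw [and_comm, subset_upperClosure_iff_forall_opens_of_closure_singleton_eq_Iic hP]
  refine and_congr Iff.rfl ⟨fun hFV => upperClosure_min hFV ?_, subset_upperClosure.trans⟩
  exact Opens.isUpperSet_of_closure_singleton_eq_Iic hP V
end

section
/- Let L be a continuous lattice such that the upper topology on L^op coincides with the Scott topology on L^op, i.e., υ(L^op) = σ(L^op). Then the space (L^op, σ(L^op)) is sober and locally compact. -/
/-!
The hypothesis `υ(Lᵒᵈ) = σ(Lᵒᵈ)` says that the space is `L` with its lower topology, whose
closed sets are generated by the principal filters `↑a`. On a complete lattice this topology is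
sober: an irreducible closed set `s` meets every basic open neighbourhood `(↑a₁ ∪ ⋯ ∪ ↑aₙ)ᶜ` of
`⨅ s`, so `s = ↑(⨅ s)`. Every Scott-closed set of `L` is compact in it, because an ultrafilter
converges to the supremum of the `c` with `↑c` in it. If `L` is continuous and
`x ∉ ↑a₁ ∪ ⋯ ∪ ↑aₙ`, pick `dᵢ ≪ aᵢ` with `dᵢ ≰ x`; by interpolation the sets `{z | ¬ dᵢ ≪ z}`
are Scott-closed, so their intersection is a compact neighbourhood of `x` (it contains the open
set `⋂ᵢ (↑dᵢ)ᶜ`) inside `(↑a₁ ∪ ⋯ ∪ ↑aₙ)ᶜ`.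
-/

open Topology TopologicalSpace Set

/-- `x` is way-below `y`: for every directed set `d` having a least upper bound `a`,
if `y ≤ a` then some element of `d` dominates `x`. -/
def WayBelow {α : Type*} [Preorder α] (x y : α) : Prop :=
  ∀ d : Set α, d.Nonempty → DirectedOn (· ≤ ·) d → ∀ a : α, IsLUB d a → y ≤ a → ∃ z ∈ d, x ≤ z

/-- A poset is continuous if for every `x` the set of elements way-below `x` is directed
(in particular nonempty) with least upper bound `x`. -/
def ContinuousPoset (α : Type*) [Preorder α] : Prop :=
  ∀ x : α, {d : α | WayBelow d x}.Nonempty ∧ DirectedOn (· ≤ ·) {d : α | WayBelow d x} ∧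
    IsLUB {d : α | WayBelow d x} x

open Filter

section WayBelow

variable {α : Type*} [Preorder α] {a b c : α}

theorem WayBelow.le (h : WayBelow a b) : a ≤ b := by
  obtain ⟨z, rfl, hz⟩ := h {b} (singleton_nonempty b) (directedOn_singleton b) b
    isLUB_singleton le_rfl
  exact hz

theorem WayBelow.trans_le (h : WayBelow a b) (hbc : b ≤ c) : WayBelow a c :=
  fun d hne hdir x hx hcx => h d hne hdir x hx (hbc.trans hcx)

theorem LE.le.trans_wayBelow (hab : a ≤ b) (h : WayBelow b c) : WayBelow a c :=
  fun d hne hdir x hx hcx => (h d hne hdir x hx hcx).imp fun _ hz => ⟨hz.1, hab.trans hz.2⟩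

namespace ContinuousPoset

theorem exists_wayBelow_not_le (hα : ContinuousPoset α) (h : ¬b ≤ a) :
    ∃ d, WayBelow d b ∧ ¬d ≤ a := by
  by_contra! hc
  exact h ((hα b).2.2.2 hc)

theorem exists_wayBelow_wayBelow (hα : ContinuousPoset α) (h : WayBelow a b) :
    ∃ c, WayBelow a c ∧ WayBelow c b := by
  set D := {d : α | ∃ c, WayBelow d c ∧ WayBelow c b}
  have hne : D.Nonempty := by
    obtain ⟨c, hc⟩ := (hα b).1
    obtain ⟨d, hd⟩ := (hα c).1
    exact ⟨d, c, hd, hc⟩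
  have hdir : DirectedOn (· ≤ ·) D := by
    rintro d₁ ⟨c₁, hd₁, hc₁⟩ d₂ ⟨c₂, hd₂, hc₂⟩
    obtain ⟨c, hc, hc₁c, hc₂c⟩ := (hα b).2.1 c₁ hc₁ c₂ hc₂
    obtain ⟨d, hd, hd₁d, hd₂d⟩ :=
      (hα c).2.1 d₁ (hd₁.trans_le hc₁c) d₂ (hd₂.trans_le hc₂c)
    exact ⟨d, ⟨c, hd, hc⟩, hd₁d, hd₂d⟩
  have hlub : IsLUB D b := by
    refine ⟨fun d ⟨c, hd, hc⟩ => hd.le.trans hc.le, fun u hu => ?_⟩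
    exact (hα b).2.2.2 fun c hc => (hα c).2.2.2 fun d hd => hu ⟨c, hd, hc⟩
  obtain ⟨d, ⟨c, hdc, hcb⟩, had⟩ := h D hne hdir b hlub le_rfl
  exact ⟨c, had.trans_wayBelow hdc, hcb⟩

theorem dirSupInacc_setOf_wayBelow (hα : ContinuousPoset α) (a : α) :
    DirSupInacc {x | WayBelow a x} := by
  intro D hne hdir x hx hax
  obtain ⟨c, hac, hcx⟩ := hα.exists_wayBelow_wayBelow hax
  obtain ⟨d, hd, hcd⟩ := hcx D hne hdir x hx le_rfl
  exact ⟨d, hd, hac.trans_le hcd⟩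

end ContinuousPoset

end WayBelow

namespace Topology.IsLower

variable {α : Type*} [CompleteLattice α] [TopologicalSpace α] [IsLower α]

theorem ultrafilter_le_nhds_sSup (f : Ultrafilter α) : ↑f ≤ 𝓝 (sSup {c | Ici c ∈ f}) :=
  tendsto_nhds_iff_not_le.2 fun _ hy =>
    f.compl_mem_iff_notMem.2 fun hyf => hy (le_sSup hyf)

theorem isCompact_of_isLowerSet_of_dirSupClosed {K : Set α} (hlow : IsLowerSet K)
    (hsup : DirSupClosed K) : IsCompact K := by
  rw [isCompact_iff_ultrafilter_le_nhds]
  intro f hfK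
  set C := {c | Ici c ∈ f}
  have hCK : C ⊆ K := fun c hc =>
    have ⟨_, hcz, hzK⟩ := f.nonempty_of_mem (inter_mem hc (le_principal_iff.1 hfK))
    hlow hcz hzK
  have hne : C.Nonempty := ⟨⊥, show Ici ⊥ ∈ f by rw [Ici_bot]; exact univ_mem⟩
  have hdir : DirectedOn (· ≤ ·) C := fun a ha b hb =>
    ⟨a ⊔ b, show Ici (a ⊔ b) ∈ f by rw [← Ici_inter_Ici]; exact inter_mem ha hb, le_sup_left,
      le_sup_right⟩
  exact ⟨sSup C, hsup hCK hne hdir (isLUB_sSup C), ultrafilter_le_nhds_sSup f⟩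

theorem sInf_mem_of_isIrreducible {s : Set α} (hs : IsIrreducible s) (hc : IsClosed s) :
    sInf s ∈ s := by
  classical
  by_contra h
  obtain ⟨_, ⟨t, ht, rfl⟩, hnt, hts⟩ :=
    IsLower.isTopologicalBasis.exists_subset_of_mem_open h hc.isOpen_compl
  have hcover : s ⊆ ⋃₀ ↑(ht.toFinset.image Ici) := fun z hz => by
    obtain ⟨a, ha, haz⟩ := mem_upperClosure.1 (not_not.1 fun hz' => hts hz' hz)
    exact ⟨Ici a, Finset.mem_image.2 ⟨a, ht.mem_toFinset.2 ha, rfl⟩, haz⟩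
  obtain ⟨_, hmem, hsa⟩ := isIrreducible_iff_sUnion_isClosed.1 hs _
    (by simp only [Finset.forall_mem_image]; exact fun a _ => isClosed_Ici) hcover
  obtain ⟨a, ha, rfl⟩ := Finset.mem_image.1 hmem
  exact hnt (mem_upperClosure.2 ⟨a, ht.mem_toFinset.1 ha, le_sInf hsa⟩)

instance quasiSober : QuasiSober α where
  sober {s} hs hc := by
    refine ⟨sInf s, ?_⟩
    rw [IsGenericPoint, closure_singleton]
    exact ((isUpperSet_of_isClosed hc).Ici_subset (sInf_mem_of_isIrreducible hs hc)).antisymm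
      fun _ => sInf_le

theorem locallyCompactSpace_of_continuousPoset (hα : ContinuousPoset α) :
    LocallyCompactSpace α := by
  refine ⟨fun x n hn => ?_⟩
  obtain ⟨u, hun, hu, hxu⟩ := mem_nhds_iff.1 hn
  obtain ⟨_, ⟨t, ht, rfl⟩, hxt, htu⟩ :=
    IsLower.isTopologicalBasis.exists_subset_of_mem_open hxu hu
  have hd : ∀ a ∈ t, ∃ d, WayBelow d a ∧ ¬d ≤ x := fun a ha =>
    hα.exists_wayBelow_not_le fun hax => hxt (mem_upperClosure.2 ⟨a, ha, hax⟩)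
  choose! d hd using hd
  refine ⟨⋂ a ∈ t, {z | ¬WayBelow (d a) z}, ?_, ?_, ?_⟩
  · refine (biInter_mem ht).2 fun a ha => mem_of_superset
      (isClosed_Ici.isOpen_compl.mem_nhds (hd a ha).2) fun z hz hw => hz hw.le
  · intro z hz
    refine hun (htu fun hzt => ?_)
    obtain ⟨a, ha, haz⟩ := mem_upperClosure.1 hzt
    exact mem_iInter₂.1 hz a ha ((hd a ha).1.trans_le haz)
  · refine isCompact_of_isLowerSet_of_dirSupClosed
      (isLowerSet_iInter₂ fun a _ z y hyz hz hy => hz (hy.trans_le hyz))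
      (DirSupClosed.iInter fun a => DirSupClosed.iInter fun _ => ?_)
    exact (hα.dirSupInacc_setOf_wayBelow (d a)).compl

end Topology.IsLower

/-- If `L` is a continuous lattice such that the upper topology on `L^op` coincides with the
Scott topology on `L^op`, then `(L^op, σ(L^op))` is sober (T0 and quasi-sober) and locally
compact. -/
theorem sober_locallyCompact_of_continuousLattice_upper_eq_scott
    {L : Type*} [CompleteLattice L] (hL : ContinuousPoset L)
    (heq : Topology.upper Lᵒᵈ = Topology.scott Lᵒᵈ Set.univ) :
    @T0Space Lᵒᵈ (Topology.scott Lᵒᵈ Set.univ) ∧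
      @QuasiSober Lᵒᵈ (Topology.scott Lᵒᵈ Set.univ) ∧
      @LocallyCompactSpace Lᵒᵈ (Topology.scott Lᵒᵈ Set.univ) := by
  rw [← heq]
  -- `upper Lᵒᵈ` is, definitionally, the lower topology of `L`.
  let _ : TopologicalSpace L := Topology.upper Lᵒᵈ
  have _ : IsLower L := ⟨rfl⟩
  exact ⟨IsLower.t0Space (α := L), IsLower.quasiSober (α := L),
    IsLower.locallyCompactSpace_of_continuousPoset (α := L) hL⟩
end

section
/- Let P be a poset such that for every n ∈ ℕ the Scott topology on the product poset P^n coincides with the n-fold product of the Scott topology on P, i.e., Σ(∏^n P) = ∏^n(ΣP). Then on the complete lattice Γ(P) of Scott closed subsets of P, the Scott topology coincides with the lower Vietoris topology: σ(Γ(P)) = υ(Γ(P)). -/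
/-
Scott-open families in `Γ(P)` are inaccessible by directed suprema, and every `A ∈ Γ(P)` is the
directed supremum of the lower closures `↓x₁ ∪ ⋯ ∪ ↓xₙ` of its finite subsets. So a Scott-open
`𝒰 ∋ A` already contains some `↓x₁ ∪ ⋯ ∪ ↓xₙ` with all `xᵢ ∈ A`. The map
`(x₁, …, xₙ) ↦ ↓x₁ ∪ ⋯ ∪ ↓xₙ` is Scott continuous on `Pⁿ`, so the preimage of `𝒰` is Scott open
in `Pⁿ`, hence open in the product topology by hypothesis. This yields open `Vᵢ ∋ xᵢ` such that
every closed set meeting all `Vᵢ` lies in `𝒰`, i.e. the lower Vietoris neighbourhood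
`◊V₁ ∩ ⋯ ∩ ◊Vₙ` of `A` lies in `𝒰`. Conversely each `◊U` is Scott open because directed suprema
in `Γ(P)` are closures of unions.
-/

open Topology TopologicalSpace Set

/-- The lower Vietoris topology on the lattice of closed subsets of a topological space,
generated by the subbasis of sets `◊U = {A closed | A ∩ U ≠ ∅}` for `U` open. -/
def lowerVietoris (X : Type*) [TopologicalSpace X] :
    TopologicalSpace (TopologicalSpace.Closeds X) :=
  TopologicalSpace.generateFrom
    {S | ∃ U : Set X, IsOpen U ∧ S = {A : TopologicalSpace.Closeds X | ((A : Set X) ∩ U).Nonempty}}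

namespace Topology

variable {α β : Type*} [Preorder α] [Preorder β]

theorem isOpen_scott_iff {s : Set α} :
    IsOpen[scott α univ] s ↔ IsUpperSet s ∧ DirSupInacc s := by
  let _ := scott α univ
  have : IsScott α univ := ⟨rfl⟩
  rw [IsScott.isOpen_iff_isUpperSet_and_dirSupInaccOn (D := univ), dirSupInaccOn_univ]

theorem _root_.ScottContinuous.continuous_scott {f : α → β} (hf : ScottContinuous f) :
    Continuous[scott α univ, scott β univ] f := by
  let _ := scott α univ
  let _ := scott β univ
  have : IsScott α univ := ⟨rfl⟩
  have : IsScott β univ := ⟨rfl⟩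
  exact (IsScott.scottContinuousOn_iff_continuous fun _ _ _ => mem_univ _).1 hf.scottContinuousOn

end Topology

namespace TopologicalSpace.Closeds

variable {X : Type*} [TopologicalSpace X]

theorem isOpen_scott_setOf_inter_nonempty {U : Set X} (hU : IsOpen U) :
    IsOpen[scott (Closeds X) univ] {A : Closeds X | ((A : Set X) ∩ U).Nonempty} := by
  refine isOpen_scott_iff.2 ⟨fun A B hAB ⟨p, hpA, hpU⟩ => ⟨p, hAB hpA, hpU⟩, ?_⟩
  rintro d - - S hS ⟨p, hpS, hpU⟩
  have hp : p ∈ closure (⋃₀ ((↑) '' d)) := by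
    rwa [hS.unique (isLUB_sSup d), coe_sSup] at hpS
  obtain ⟨q, hqU, B, ⟨B, hBd, rfl⟩, hqB⟩ := mem_closure_iff.1 hp U hU hpU
  exact ⟨B, hBd, q, hqB, hqU⟩

variable (X) in
theorem scott_le_lowerVietoris : scott (Closeds X) univ ≤ lowerVietoris X :=
  le_generateFrom <| by
    rintro _ ⟨U, hU, rfl⟩
    exact isOpen_scott_setOf_inter_nonempty hU

section ClosedIic

variable {P : Type*} [Preorder P] [TopologicalSpace P] [ClosedIicTopology P]

def lowerClosureOfFinite {s : Set P} (hs : s.Finite) : Closeds P :=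
  ⟨lowerClosure s, by
    rw [coe_lowerClosure]
    exact hs.isClosed_biUnion fun _ _ => isClosed_Iic⟩

theorem lowerClosureOfFinite_mono {s t : Set P} {hs : s.Finite} {ht : t.Finite} (hst : s ⊆ t) :
    lowerClosureOfFinite hs ≤ lowerClosureOfFinite ht :=
  lowerClosure_mono hst

def finiteLowerClosures (A : Closeds P) : Set (Closeds P) :=
  {B | ∃ s : Set P, ∃ hs : s.Finite, s ⊆ A ∧ lowerClosureOfFinite hs = B}

def lowerClosureRange {ι : Type*} [Finite ι] (x : ι → P) : Closeds P :=
  lowerClosureOfFinite (finite_range x)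

theorem lowerClosureRange_mono {ι : Type*} [Finite ι] :
    Monotone (lowerClosureRange : (ι → P) → Closeds P) := fun _ z h =>
  LowerSet.coe_subset_coe.2 <| lowerClosure_le.2 <| range_subset_iff.2 fun i =>
    ⟨z i, mem_range_self i, h i⟩

end ClosedIic

section Scott

variable {P : Type*} [Preorder P] [TopologicalSpace P] [IsScott P univ]

theorem lowerClosureOfFinite_le_iff {s : Set P} (hs : s.Finite) {C : Closeds P} :
    lowerClosureOfFinite hs ≤ C ↔ s ⊆ C :=
  ⟨fun h => subset_lowerClosure.trans h,
    fun h => lowerClosure_min h (IsScott.isLowerSet_of_isClosed C.isClosed)⟩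

theorem isLUB_finiteLowerClosures (A : Closeds P) : IsLUB (finiteLowerClosures A) A := by
  refine ⟨?_, fun C hC p hp => ?_⟩
  · rintro _ ⟨s, hs, hsA, rfl⟩
    exact (lowerClosureOfFinite_le_iff hs).2 hsA
  · have := hC ⟨{p}, finite_singleton p, singleton_subset_iff.2 hp, rfl⟩
    exact (lowerClosureOfFinite_le_iff _).1 this rfl

theorem directedOn_finiteLowerClosures (A : Closeds P) :
    DirectedOn (· ≤ ·) (finiteLowerClosures A) := by
  rintro _ ⟨s, hs, hsA, rfl⟩ _ ⟨t, ht, htA, rfl⟩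
  exact ⟨_, ⟨s ∪ t, hs.union ht, union_subset hsA htA, rfl⟩,
    lowerClosureOfFinite_mono subset_union_left,
    lowerClosureOfFinite_mono subset_union_right⟩

theorem exists_lowerClosureRange_mem {𝒰 : Set (Closeds P)} (h𝒰 : DirSupInacc 𝒰) {A : Closeds P}
    (hA : A ∈ 𝒰) : ∃ n, ∃ x : Fin n → P, (∀ i, x i ∈ A) ∧ lowerClosureRange x ∈ 𝒰 := by
  obtain ⟨_, ⟨s, hs, hsA, rfl⟩, hs𝒰⟩ := h𝒰 (d := finiteLowerClosures A)
    ⟨_, ∅, finite_empty, empty_subset _, rfl⟩ (directedOn_finiteLowerClosures A)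
    (isLUB_finiteLowerClosures A) hA
  obtain ⟨n, x, -, rfl⟩ := hs.fin_param
  exact ⟨n, x, fun i => hsA ⟨i, rfl⟩, hs𝒰⟩

theorem lowerClosureRange_le_iff {ι : Type*} [Finite ι] {x : ι → P} {C : Closeds P} :
    lowerClosureRange x ≤ C ↔ ∀ i, x i ∈ C :=
  (lowerClosureOfFinite_le_iff _).trans range_subset_iff

theorem scottContinuous_lowerClosureRange {ι : Type*} [Finite ι] :
    ScottContinuous (lowerClosureRange : (ι → P) → Closeds P) := by
  intro d hne hdir a ha
  refine ⟨lowerClosureRange_mono.mem_upperBounds_image ha.1,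
    fun C hC => lowerClosureRange_le_iff.2 fun i => ?_⟩
  refine IsScott.dirSupClosed_of_isClosed C.isClosed ?_ (hne.image _)
    (directedOn_image.2 (hdir.mono fun _ _ h => h i)) (isLUB_pi.1 ha i)
  rintro _ ⟨y, hy, rfl⟩
  exact lowerClosureRange_le_iff.1 (hC ⟨y, hy, rfl⟩) i

theorem lowerVietoris_le_scott
    (hprod : ∀ n, (Pi.topologicalSpace : TopologicalSpace (Fin n → P)) ≤ scott (Fin n → P) univ) :
    lowerVietoris P ≤ scott (Closeds P) univ := by
  intro 𝒰 h𝒰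
  obtain ⟨hup, hinacc⟩ := isOpen_scott_iff.1 h𝒰
  let _ := lowerVietoris P
  refine isOpen_iff_forall_mem_open.2 fun A hA => ?_
  obtain ⟨n, x, hxA, hx𝒰⟩ := exists_lowerClosureRange_mem hinacc hA
  have hopen : IsOpen (lowerClosureRange ⁻¹' 𝒰 : Set (Fin n → P)) :=
    hprod n _ (continuous_def.1 scottContinuous_lowerClosureRange.continuous_scott _ h𝒰)
  obtain ⟨V, hV, hV𝒰⟩ := isOpen_pi_iff'.1 hopen x hx𝒰
  refine ⟨⋂ i, {B : Closeds P | ((B : Set P) ∩ V i).Nonempty}, fun B hB => ?_,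
    isOpen_iInter_of_finite fun i => isOpen_generateFrom_of_mem ⟨V i, (hV i).1, rfl⟩,
    mem_iInter.2 fun i => ⟨x i, hxA i, (hV i).2⟩⟩
  choose y hyB hyV using mem_iInter.1 hB
  exact hup (lowerClosureRange_le_iff.2 hyB) (hV𝒰 fun i _ => hyV i)

end Scott

end TopologicalSpace.Closeds

/-- If `P` is a poset such that for every `n` the Scott topology on the product poset `Pⁿ`
coincides with the `n`-fold product of the Scott topology of `P`, then on the complete lattice
`Γ(P)` of Scott closed subsets of `P` the Scott topology coincides with the lower Vietoris
topology. -/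
theorem scott_eq_lowerVietoris_of_scott_prod_eq_prod_scott
    {P : Type*} [PartialOrder P] [TopologicalSpace P] [Topology.IsScott P Set.univ]
    (hprod : ∀ n : ℕ, Topology.scott (Fin n → P) Set.univ =
      (Pi.topologicalSpace : TopologicalSpace (Fin n → P))) :
    Topology.scott (TopologicalSpace.Closeds P) Set.univ = lowerVietoris P :=
  le_antisymm (Closeds.scott_le_lowerVietoris P)
    (Closeds.lowerVietoris_le_scott fun n => (hprod n).ge)
end

section
/- Let P be a poset. If the space (P, σ(P)) is first-countable, then on the complete lattice Γ(P) of Scott closed subsets of P the Scott topology coincides with the lower Vietoris topology: σ(Γ(P)) = υ(Γ(P)). -/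
open Topology TopologicalSpace Set

/-!
Each `◊U` is Scott open because the join of closed sets is the closure of their union.
Conversely, a Scott open `𝒰 ∋ A` contains `↓F` for some finite `F ⊆ A`. If no basic open
`⋂_{p ∈ F} ◊V_p` around `A` lay inside `𝒰`, countable neighbourhood bases would give closed
sets `B_k ∉ 𝒰` and points `e_{k,p} ∈ B_k` converging to `p`; then `⋁_p ↓e_{k,p} ∉ 𝒰` would
converge to `↓F ∈ 𝒰` in the Scott topology of `Γ(P)`, which is absurd. The crux is that
Scott convergence of sequences survives pairing (`ScottConverges.prodMk`), although the Scott
topology of a product is in general finer than the product topology; finite joins then preserve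
Scott convergence because `⊔` is Scott continuous.
-/

open Filter

section Preorder

variable {α β : Type*} [Preorder α] [Preorder β]

lemma DirSupClosed.preimage {C : Set β} (hC : DirSupClosed C) {f : α → β}
    (hf : ScottContinuous f) : DirSupClosed (f ⁻¹' C) :=
  fun _ hdC hne hdir _ hda =>
    hC (image_subset_iff.2 hdC) (hne.image f) (hdir.mono_comp fun _ _ h => hf.monotone h)
      (hf hne hdir hda)

lemma Set.Finite.dirSupClosed_lowerClosure {T : Set α} (hT : T.Finite) :
    DirSupClosed (lowerClosure T : Set α) := by
  rw [coe_lowerClosure]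
  induction T, hT using Set.Finite.induction_on with
  | empty => simp
  | insert _ _ ih => rw [biUnion_insert]; exact (dirSupClosed_Iic _).union ih

lemma DirSupClosed.union_lowerClosure {C S : Set α} (hC : DirSupClosed C)
    (hS : ∀ v ∉ C, {t ∈ S | v ≤ t}.Finite) : DirSupClosed (C ∪ lowerClosure S) := by
  intro d hdCS hne hdir s hds
  by_cases hcof : IsCofinalFor d (d ∩ C)
  · exact .inl <| hC inter_subset_right (hcof.nonempty hne)
      (hdir.of_isCofinalFor inter_subset_left hcof) (hds.of_isCofinalFor inter_subset_left hcof)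
  · obtain ⟨d₀, hd₀, hd₀C⟩ : ∃ d₀ ∈ d, ∀ q ∈ d, d₀ ≤ q → q ∉ C := by
      simp only [IsCofinalFor, not_forall] at hcof
      obtain ⟨d₀, hd₀, h⟩ := hcof
      exact ⟨d₀, hd₀, fun q hq hle hqC => h ⟨q, ⟨hq, hqC⟩, hle⟩⟩
    have hcof' : IsCofinalFor d (d ∩ Ici d₀) := fun q hq =>
      let ⟨r, hr, hqr, hd₀r⟩ := hdir q hq d₀ hd₀
      ⟨r, ⟨hr, hd₀r⟩, hqr⟩
    have hsub : d ∩ Ici d₀ ⊆ lowerClosure {t ∈ S | d₀ ≤ t} := by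
      rintro q ⟨hq, hd₀q⟩
      obtain ⟨t, ht, hqt⟩ := (hdCS hq).resolve_left (hd₀C q hq hd₀q)
      exact ⟨t, ⟨ht, hd₀q.trans hqt⟩, hqt⟩
    refine .inr <| lowerClosure_mono (sep_subset _ _) <|
      (hS d₀ (hd₀C d₀ hd₀ le_rfl)).dirSupClosed_lowerClosure hsub ⟨d₀, hd₀, le_rfl⟩
        (hdir.of_isCofinalFor inter_subset_left hcof') (hds.of_isCofinalFor inter_subset_left hcof')

/-- `a k → u` in the Scott topology of `α`. -/
def ScottConverges (a : ℕ → α) (u : α) : Prop :=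
  ∀ ⦃C : Set α⦄, IsLowerSet C → DirSupClosed C → (∃ᶠ k in atTop, a k ∈ C) → u ∈ C

lemma ScottConverges.const (u : α) : ScottConverges (fun _ => u) u :=
  fun _ _ _ h => frequently_const.1 h

lemma ScottConverges.map {a : ℕ → α} {u : α} (ha : ScottConverges a u) {f : α → β}
    (hf : ScottContinuous f) : ScottConverges (fun k => f (a k)) (f u) :=
  fun _ hCl hCd h => ha (hCl.preimage hf.monotone) (hCd.preimage hf) h

lemma ScottConverges.prodMk {a : ℕ → α} {b : ℕ → β} {u : α} {y : β}
    (ha : ScottConverges a u) (hb : ScottConverges b y) :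
    ScottConverges (fun k => (a k, b k)) (u, y) := by
  intro R hRl hRd hR
  set C := (·, y) ⁻¹' R
  have hCl : IsLowerSet C := hRl.preimage fun _ _ h => Prod.mk_le_mk.2 ⟨h, le_rfl⟩
  have hCd : DirSupClosed C := hRd.preimage (.prodMk .id (.const y))
  have mem_C : ∀ v, (∃ᶠ k in atTop, (a k, b k) ∈ R ∧ v ≤ a k) → v ∈ C := fun v hv =>
    hb (hRl.preimage fun _ _ h => Prod.mk_le_mk.2 ⟨le_rfl, h⟩)
      (hRd.preimage (.prodMk (.const v) .id))
      (hv.mono fun k hk => hRl (Prod.mk_le_mk.2 ⟨hk.2, le_rfl⟩) hk.1)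
  by_cases hu : ∃ᶠ k in atTop, (a k, b k) ∈ R ∧ u ≤ a k
  · exact mem_C u hu
  -- Otherwise `R` is hit along the terms `a k ≱ u`, and every `v ∉ C` lies below only finitely
  -- many of them, so `C ∪ ↓S` is Scott closed.
  set S := a '' {k | (a k, b k) ∈ R ∧ ¬ u ≤ a k}
  have hS : ∀ v ∉ C, {t ∈ S | v ≤ t}.Finite := by
    intro v hv
    have hfin := Nat.frequently_atTop_iff_infinite.not.1 (mt (mem_C v) hv)
    refine (Set.not_infinite.1 hfin).image a |>.subset ?_
    rintro _ ⟨⟨k, hk, rfl⟩, hvk⟩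
    exact ⟨k, ⟨hk.1, hvk⟩, rfl⟩
  have hfreq : ∃ᶠ k in atTop, a k ∈ C ∪ lowerClosure S :=
    (hR.and_eventually (not_frequently.1 hu)).mono fun k hk =>
      .inr (subset_lowerClosure ⟨k, ⟨hk.1, fun h => hk.2 ⟨hk.1, h⟩⟩, rfl⟩)
  obtain huC | ⟨_, ⟨k, hk, rfl⟩, huk⟩ :=
    ha (hCl.union (lowerClosure S).lower) (hCd.union_lowerClosure hS) hfreq
  · exact huC
  · exact absurd huk hk.2

lemma ScottConverges.finset_sup {L ι : Type*} [SemilatticeSup L] [OrderBot L] (s : Finset ι)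
    {a : ι → ℕ → L} {u : ι → L} (h : ∀ i ∈ s, ScottConverges (a i) (u i)) :
    ScottConverges (fun k => s.sup (a · k)) (s.sup u) := by
  classical
  induction s using Finset.induction_on with
  | empty => simpa using ScottConverges.const (⊥ : L)
  | insert i s _ ih =>
    simp only [Finset.sup_insert]
    exact ((h i (Finset.mem_insert_self i s)).prodMk
      (ih fun j hj => h j (Finset.mem_insert_of_mem hj))).map ScottContinuous.sup₂

end Preorder

lemma Topology.isOpen_scott_iff_s4 {α : Type*} [Preorder α] {s : Set α} :
    IsOpen[scott α univ] s ↔ IsUpperSet s ∧ DirSupInacc s := by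
  let := scott α univ
  have : IsScott α univ := ⟨rfl⟩
  simpa using IsScott.isOpen_iff_isUpperSet_and_dirSupInaccOn (D := univ)

lemma TopologicalSpace.Closeds.dirSupInacc_setOf_inter_nonempty {X : Type*} [TopologicalSpace X]
    {U : Set X} (hU : IsOpen U) : DirSupInacc {A : Closeds X | ((A : Set X) ∩ U).Nonempty} := by
  rintro d - - S hdS ⟨p, hpS, hpU⟩
  rw [← hdS.sSup_eq, Closeds.coe_sSup, sUnion_image] at hpS
  obtain ⟨q, hqU, hq⟩ := mem_closure_iff.1 hpS U hU hpU
  obtain ⟨D, hD, hqD⟩ := mem_iUnion₂.1 hq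
  exact ⟨D, hD, q, hqD, hqU⟩

section ScottSpace

variable {P : Type*} [Preorder P] [TopologicalSpace P] [IsScott P univ]

lemma Filter.Tendsto.scottConverges {a : ℕ → P} {u : P} (h : Tendsto a atTop (𝓝 u)) :
    ScottConverges a u := fun _ hCl hCd hfreq =>
  (IsScott.isClosed_iff_isLowerSet_and_dirSupClosed.2 ⟨hCl, hCd⟩).mem_of_frequently_of_tendsto
    hfreq h

def closedsIic (x : P) : Closeds P := ⟨Iic x, isClosed_Iic⟩

lemma closedsIic_le_iff {x : P} {A : Closeds P} : closedsIic x ≤ A ↔ x ∈ A :=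
  ⟨fun h => h le_rfl, fun h _ hy => IsScott.isLowerSet_of_isClosed A.isClosed hy h⟩

lemma scottContinuous_closedsIic : ScottContinuous (closedsIic : P → Closeds P) := by
  intro d hne hdir s hds
  refine ⟨?_, fun W hW => closedsIic_le_iff.2 ?_⟩
  · rintro _ ⟨q, hq, rfl⟩
    exact closedsIic_le_iff.2 (hds.1 hq)
  · exact IsScott.dirSupClosed_of_isClosed W.isClosed
      (fun q hq => closedsIic_le_iff.1 (hW ⟨q, hq, rfl⟩)) hne hdir hds

lemma exists_finset_sup_closedsIic_mem {𝒰 : Set (Closeds P)} (h𝒰 : DirSupInacc 𝒰)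
    {A : Closeds P} (hA : A ∈ 𝒰) :
    ∃ F : Finset P, ↑F ⊆ (A : Set P) ∧ F.sup closedsIic ∈ 𝒰 := by
  classical
  set 𝔽 := {F : Finset P | ↑F ⊆ (A : Set P)}
  have hne : 𝔽.Nonempty := ⟨∅, by simp [𝔽]⟩
  have hdir : DirectedOn (· ⊆ ·) 𝔽 := fun F hF G hG =>
    ⟨F ∪ G, by simp_all [𝔽, Finset.coe_union], Finset.subset_union_left, Finset.subset_union_right⟩
  have hlub : IsLUB ((·.sup closedsIic) '' 𝔽) A := by
    refine ⟨?_, fun W hW p hp => ?_⟩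
    · rintro _ ⟨F, hF, rfl⟩
      exact Finset.sup_le fun p hp => closedsIic_le_iff.2 (hF hp)
    · simpa [closedsIic_le_iff] using hW ⟨{p}, by simpa [𝔽] using hp, rfl⟩
  obtain ⟨_, ⟨F, hFA, rfl⟩, hF⟩ :=
    h𝒰 (hne.image _) (hdir.mono_comp fun _ _ h => Finset.sup_mono h) hlub hA
  exact ⟨F, hFA, hF⟩

lemma exists_lowerVietoris_basicOpen_subset [FirstCountableTopology P] {𝒰 : Set (Closeds P)}
    (hup : IsUpperSet 𝒰) (hinacc : DirSupInacc 𝒰) {F : Finset P} (hF : F.sup closedsIic ∈ 𝒰) :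
    ∃ V : P → Set P, (∀ p ∈ F, IsOpen (V p) ∧ p ∈ V p) ∧
      ⋂ p ∈ F, {B : Closeds P | ((B : Set P) ∩ V p).Nonempty} ⊆ 𝒰 := by
  by_contra! hcon
  choose V hV using fun p : P => (nhds_basis_opens p).exists_antitone_subbasis
  have : ∀ k, ∃ B ∉ 𝒰, ∀ p ∈ F, ((B : Set P) ∩ V p k).Nonempty := fun k => by
    obtain ⟨B, hB, hB𝒰⟩ := not_subset.1 (hcon (V · k) fun p _ => ((hV p).1 k).symm)
    exact ⟨B, hB𝒰, by simpa using hB⟩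
  choose B hB𝒰 hB using this
  choose! e he using hB
  have hconv : ∀ p ∈ F, ScottConverges (e · p) p := fun p hp =>
    ((hV p).2.tendsto fun k => (he k p hp).2).scottConverges
  refine ScottConverges.finset_sup F (fun p hp => (hconv p hp).map scottContinuous_closedsIic)
    hup.compl (dirSupClosed_compl.2 hinacc) (.of_forall fun k hk => hB𝒰 k (hup ?_ hk)) hF
  exact Finset.sup_le fun p hp => closedsIic_le_iff.2 (he k p hp).1

end ScottSpace

/-- If `(P, σ(P))` is first-countable, then on the complete lattice `Γ(P)` of Scott closed
subsets of `P` the Scott topology coincides with the lower Vietoris topology. -/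
theorem scott_eq_lowerVietoris_of_firstCountable
    {P : Type*} [PartialOrder P] [TopologicalSpace P] [Topology.IsScott P Set.univ]
    [FirstCountableTopology P] :
    Topology.scott (TopologicalSpace.Closeds P) Set.univ = lowerVietoris P := by
  apply le_antisymm
  · refine le_generateFrom ?_
    rintro _ ⟨U, hU, rfl⟩
    exact isOpen_scott_iff_s4.2 ⟨fun A B hAB ⟨p, hpA, hpU⟩ => ⟨p, hAB hpA, hpU⟩,
      Closeds.dirSupInacc_setOf_inter_nonempty hU⟩
  · intro 𝒰 h𝒰
    let _ := lowerVietoris P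
    obtain ⟨hup, hinacc⟩ := isOpen_scott_iff_s4.1 h𝒰
    refine isOpen_iff_forall_mem_open.2 fun A hA => ?_
    obtain ⟨F, hFA, hF⟩ := exists_finset_sup_closedsIic_mem hinacc hA
    obtain ⟨V, hV, hV𝒰⟩ := exists_lowerVietoris_basicOpen_subset hup hinacc hF
    refine ⟨_, hV𝒰, isOpen_biInter_finset fun p hp => ?_, mem_iInter₂.2 fun p hp =>
      ⟨p, hFA hp, (hV p hp).2⟩⟩
    exact isOpen_generateFrom_of_mem ⟨V p, (hV p hp).1, rfl⟩
end

section
/- Let X = {0} ∪ {1/n : n ∈ ℕ, n ≥ 1} with the subspace topology inherited from the real line ℝ, and let C(X) be the complete lattice of closed subsets of X ordered by inclusion. Then C(X) equipped with the Scott topology is a sober space, but it is not locally compact; in particular the Scott topology on C(X) differs from the lower Vietoris topology: σ(C(X)) ≠ υ(C(X)). -/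
/-!
The points `1/(n+1)` of `X` are isolated and `0` is the only limit point.

Sobriety: let `S` be an irreducible Scott-closed family and `T = ⋃ S`. Since `◊{x}` is Scott
open for isolated `x`, irreducibility puts every finite subset of `T \ {0}` below a member of
`S`, so `S` contains their directed supremum `closure (T \ {0})`. If `0 ∈ T` is not in that
closure, irreducibility against `◊(closure (T \ {0}))ᶜ` adds `0`. Either way `sup S ∈ S`, and it
is the generic point of `S`.

Non-local compactness: for finite-valued `C : X → Set X`, the family of those `A` with `A ⊆ C x`
for all `x ∈ A` is Scott closed, since a directed union of such sets is finite. A compact Scott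
neighbourhood `K` of `{0}` contains finite sets `B m` supported on `{1/(n+1) : n ≥ m}`; a suitable
`C` makes every `B m` lie in that closed family, whose complement together with the sets
`◊{1/(n+1) : n < M}` covers `K` while missing `B M`. For `B m = {1/(m+1)}` the same complement is
a Scott neighbourhood of `{0}` avoiding all `{1/(m+1)}`, which converge to `{0}` in the lower
Vietoris topology.
-/

open Topology TopologicalSpace Set

/-- The subspace `X = {0} ∪ {1/n : n ≥ 1}` of the real line. -/
def Xspace : Set ℝ := {x : ℝ | x = 0 ∨ ∃ n : ℕ, 0 < n ∧ x = 1 / (n : ℝ)}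

open Filter

theorem Topology.IsScott.quasiSober_of_sSup_mem {α : Type*} [CompleteLattice α]
    [TopologicalSpace α] [IsScott α univ]
    (h : ∀ S : Set α, IsIrreducible S → IsClosed S → sSup S ∈ S) : QuasiSober α where
  sober {S} hS hSc := ⟨sSup S, by
    rw [IsGenericPoint, IsScott.closure_singleton]
    exact Subset.antisymm (fun _ hb => IsScott.isLowerSet_of_isClosed hSc hb (h S hS hSc))
      fun _ hb => le_sSup hb⟩

namespace TopologicalSpace.Closeds

variable {X : Type*} [TopologicalSpace X] [TopologicalSpace (Closeds X)]
  [IsScott (Closeds X) univ]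

lemma isOpen_setOf_inter_nonempty {U : Set X} (hU : IsOpen U) :
    IsOpen {A : Closeds X | ((A : Set X) ∩ U).Nonempty} := by
  rw [IsScott.isOpen_iff_isUpperSet_and_dirSupInaccOn (D := univ), dirSupInaccOn_univ,
    dirSupInacc_iff_forall_sSup]
  refine ⟨fun A B hAB hA => hA.mono (inter_subset_inter_left _ hAB), fun d _ _ hd => ?_⟩
  rw [mem_ofPred_eq, coe_sSup, closure_inter_open_nonempty_iff hU] at hd
  obtain ⟨x, ⟨_, ⟨A, hA, rfl⟩, hxA⟩, hxU⟩ := hd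
  exact ⟨A, hA, x, hxA, hxU⟩

lemma isOpen_setOf_subset {F : Set X} (hF : F.Finite) (hiso : ∀ x ∈ F, IsOpen ({x} : Set X)) :
    IsOpen {A : Closeds X | F ⊆ A} := by
  convert hF.isOpen_biInter fun x hx => isOpen_setOf_inter_nonempty (hiso x hx) using 1
  ext A
  simp [subset_def]

lemma exists_mem_superset_of_isIrreducible {S : Set (Closeds X)} (hS : IsIrreducible S)
    {F : Set X} (hF : F.Finite) (hiso : ∀ x ∈ F, IsOpen ({x} : Set X))
    (hFS : F ⊆ ⋃ A ∈ S, (A : Set X)) : ∃ A ∈ S, F ⊆ A := by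
  induction F, hF using Set.Finite.induction_on with
  | empty => exact hS.nonempty.imp fun A hA => ⟨hA, empty_subset _⟩
  | @insert x F _ hF ih =>
    rw [insert_subset_iff] at hFS
    have hisoF : ∀ y ∈ F, IsOpen ({y} : Set X) := fun y hy => hiso y (mem_insert_of_mem x hy)
    obtain ⟨A₁, hA₁, hFA₁⟩ := ih hisoF hFS.2
    obtain ⟨A₂, hA₂, hxA₂⟩ := mem_iUnion₂.mp hFS.1
    obtain ⟨A, hA, hFA, y, hyA, rfl⟩ := hS.isPreirreducible _ _ (isOpen_setOf_subset hF hisoF)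
      (isOpen_setOf_inter_nonempty (hiso x (mem_insert x F))) ⟨A₁, hA₁, hFA₁⟩
      ⟨A₂, hA₂, x, hxA₂, rfl⟩
    exact ⟨A, hA, insert_subset hyA hFA⟩

variable [T1Space X]

lemma closure_mem_of_forall_finite {S : Set (Closeds X)} (hS : IsClosed S) {Y : Set X}
    (hY : ∀ F ⊆ Y, F.Finite → ∃ A ∈ S, F ⊆ A) : Closeds.closure Y ∈ S := by
  let D : Set (Closeds X) := {A | (A : Set X).Finite ∧ (A : Set X) ⊆ Y}
  have hDS : D ⊆ S := fun A hA => by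
    obtain ⟨B, hB, hAB⟩ := hY A hA.2 hA.1
    exact IsScott.isLowerSet_of_isClosed hS hAB hB
  have hD : DirectedOn (· ≤ ·) D := fun A hA B hB =>
    ⟨A ⊔ B, ⟨by simp [hA.1, hB.1], by simp [hA.2, hB.2]⟩, le_sup_left, le_sup_right⟩
  have hsup : sSup D = Closeds.closure Y := le_antisymm
    (sSup_le fun A hA => hA.2.trans subset_closure)
    (closure_le.mpr fun y hy =>
      le_sSup (show {y} ∈ D from ⟨finite_singleton y, singleton_subset_iff.mpr hy⟩) rfl)
  rw [← hsup]
  exact dirSupClosed_iff_forall_sSup.mp (IsScott.dirSupClosed_of_isClosed hS) hDS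
    ⟨⊥, by simp [D]⟩ hD

lemma exists_finite_mem_of_closure_mem {U : Set (Closeds X)} (hU : IsOpen U) {Y : Set X}
    (hY : Closeds.closure Y ∈ U) : ∃ A ∈ U, (A : Set X).Finite ∧ (A : Set X) ⊆ Y := by
  by_contra! h
  exact closure_mem_of_forall_finite hU.isClosed_compl
    (fun F hFY hF => ⟨⟨F, hF.isClosed⟩, fun hFU => h _ hFU hF hFY, subset_rfl⟩) hY

lemma isClosed_setOf_forall_subset {C : X → Set X} (hC : ∀ x, (C x).Finite) :
    IsClosed {A : Closeds X | ∀ x ∈ A, (A : Set X) ⊆ C x} := by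
  rw [IsScott.isClosed_iff_isLowerSet_and_dirSupClosed, dirSupClosed_iff_forall_sSup]
  refine ⟨fun A B hBA hA x hx => (SetLike.coe_subset_coe.mpr hBA).trans (hA x (hBA hx)),
    fun d hdS _ hd => ?_⟩
  set T := ⋃₀ (SetLike.coe '' d)
  have hT : ∀ x ∈ T, T ⊆ C x := by
    rintro x ⟨_, ⟨A, hA, rfl⟩, hxA⟩ y ⟨_, ⟨B, hB, rfl⟩, hyB⟩
    obtain ⟨E, hE, hAE, hBE⟩ := hd A hA B hB
    exact hdS hE x (hAE hxA) (hBE hyB)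
  have hTfin : T.Finite := by
    rcases T.eq_empty_or_nonempty with hT₀ | ⟨x, hx⟩
    · exact hT₀ ▸ finite_empty
    · exact (hC x).subset (hT x hx)
  have hsup : ((sSup d : Closeds X) : Set X) = T := by rw [coe_sSup, hTfin.isClosed.closure_eq]
  intro x hx
  rw [hsup]
  exact hT x (hsup ▸ hx)

lemma sSup_mem_of_isIrreducible {z : X} (hiso : ∀ x ≠ z, IsOpen ({x} : Set X))
    {S : Set (Closeds X)} (hS : IsIrreducible S) (hSc : IsClosed S) : sSup S ∈ S := by
  set T := ⋃ A ∈ S, (A : Set X)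
  have hsup : sSup S = Closeds.closure T := by ext1; simp [T, sUnion_image]
  have hfin : ∀ F ⊆ T \ {z}, F.Finite → ∃ A ∈ S, F ⊆ A := fun F hFT hF =>
    exists_mem_superset_of_isIrreducible hS hF (fun x hx => hiso x (hFT hx).2)
      (hFT.trans sdiff_subset)
  rw [hsup]
  by_cases hz : z ∈ T ∧ z ∉ closure (T \ {z})
  · -- an element of `S` meeting the neighbourhood `(closure (T \ {z}))ᶜ` of `z` must contain `z`
    refine closure_mem_of_forall_finite hSc fun F hFT hF => ?_
    obtain ⟨A₁, hA₁, hFA₁⟩ := hfin (F \ {z}) (sdiff_subset_sdiff_left hFT) hF.sdiff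
    obtain ⟨A₂, hA₂, hzA₂⟩ := mem_iUnion₂.mp hz.1
    obtain ⟨A, hA, hFA, y, hyA, hy⟩ := hS.isPreirreducible _ _
      (isOpen_setOf_subset hF.sdiff fun x hx => hiso x hx.2)
      (isOpen_setOf_inter_nonempty isClosed_closure.isOpen_compl) ⟨A₁, hA₁, hFA₁⟩
      ⟨A₂, hA₂, z, hzA₂, hz.2⟩
    have hyz : y = z := by_contra fun hyz => hy (subset_closure ⟨mem_biUnion hA hyA, hyz⟩)
    refine ⟨A, hA, fun x hx => ?_⟩
    rcases eq_or_ne x z with rfl | hxz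
    · exact hyz ▸ hyA
    · exact hFA ⟨hx, hxz⟩
  · have hTz : Closeds.closure T = Closeds.closure (T \ {z}) := by
      refine Closeds.ext ((closure_mono sdiff_subset).antisymm' ?_)
      refine closure_minimal (fun x hx => ?_) isClosed_closure
      rcases eq_or_ne x z with rfl | hxz
      · exact not_and_not_right.mp hz hx
      · exact subset_closure ⟨hx, hxz⟩
    rw [hTz]
    exact closure_mem_of_forall_finite hSc hfin

end TopologicalSpace.Closeds

section LowerVietoris

variable {X : Type*} [TopologicalSpace X] [T1Space X]

lemma tendsto_lowerVietoris_singleton {ι : Type*} {l : Filter ι} {f : ι → X} {x : X}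
    (hf : Tendsto f l (𝓝 x)) :
    Tendsto (fun i => ({f i} : Closeds X)) l (@nhds _ (lowerVietoris X) {x}) := by
  rw [lowerVietoris, TopologicalSpace.tendsto_nhds_generateFrom_iff]
  rintro _ ⟨U, hU, rfl⟩ ⟨_, rfl, hxU⟩
  exact mem_of_superset (hf (hU.mem_nhds hxU)) fun i hi => ⟨f i, rfl, hi⟩

end LowerVietoris

namespace Xspace

def zero : Xspace := ⟨0, Or.inl rfl⟩

noncomputable def pt (n : ℕ) : Xspace :=
  ⟨1 / (n + 1), Or.inr ⟨n + 1, n.succ_pos, by push_cast; rfl⟩⟩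

@[simp] lemma coe_pt (n : ℕ) : (pt n : ℝ) = 1 / (n + 1) := rfl

@[simp] lemma coe_zero : (zero : ℝ) = 0 := rfl

lemma pt_ne_zero (n : ℕ) : pt n ≠ zero := by
  rw [ne_eq, Subtype.ext_iff, coe_pt, coe_zero]
  positivity

lemma pt_injective : Function.Injective pt := by
  intro m n h
  simpa [Subtype.ext_iff] using h

lemma eq_zero_or_eq_pt (x : Xspace) : x = zero ∨ ∃ n, x = pt n := by
  obtain ⟨x, rfl | ⟨n, hn, rfl⟩⟩ := x
  · exact .inl rfl
  · obtain ⟨m, rfl⟩ := Nat.exists_eq_add_one_of_ne_zero hn.ne'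
    exact .inr ⟨m, by simp [pt]⟩

lemma tendsto_pt : Tendsto pt atTop (𝓝 zero) :=
  tendsto_subtype_rng.mpr tendsto_one_div_add_atTop_nhds_zero_nat

lemma isOpen_singleton_pt (n : ℕ) : IsOpen {pt n} := by
  have h : {pt n} = {x : Xspace | 1 / ((n : ℝ) + 2) < x} \ pt '' Iio n := by
    ext x
    rcases eq_zero_or_eq_pt x with rfl | ⟨m, rfl⟩
    · exact iff_of_false (pt_ne_zero n).symm
        fun h => not_lt.mpr (by positivity : (0 : ℝ) ≤ 1 / ((n : ℝ) + 2)) h.1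
    · rw [mem_singleton_iff, pt_injective.eq_iff, Set.mem_sdiff, mem_ofPred_eq,
        pt_injective.mem_set_image, mem_Iio, coe_pt,
        one_div_lt_one_div (by positivity) (by positivity)]
      norm_cast
      omega
  rw [h]
  exact (isOpen_lt continuous_const continuous_subtype_val).sdiff
    ((finite_Iio n).image pt).isClosed

lemma isOpen_singleton_of_ne_zero {x : Xspace} (hx : x ≠ zero) : IsOpen {x} := by
  obtain rfl | ⟨n, rfl⟩ := eq_zero_or_eq_pt x
  · exact absurd rfl hx
  · exact isOpen_singleton_pt n

lemma isOpen_image_pt (N : Set ℕ) : IsOpen (pt '' N) := by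
  rw [image_eq_iUnion]
  exact isOpen_biUnion fun n _ => isOpen_singleton_pt n

lemma finite_setOf_mem_image_Ici (x : Xspace) : {m | x ∈ pt '' Ici m}.Finite := by
  rcases eq_zero_or_eq_pt x with rfl | ⟨n, rfl⟩
  · simp [pt_ne_zero]
  · exact (finite_Iic n).subset fun m (hm : pt n ∈ pt '' Ici m) =>
      mem_Iic.mpr (pt_injective.mem_set_image.mp hm)

section Scott

variable [TopologicalSpace (Closeds Xspace)] [IsScott (Closeds Xspace) univ]

theorem quasiSober_closeds : QuasiSober (Closeds Xspace) :=
  IsScott.quasiSober_of_sSup_mem fun _ hS hSc =>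
    Closeds.sSup_mem_of_isIrreducible (fun _ => isOpen_singleton_of_ne_zero) hS hSc

lemma exists_isOpen_superset_setOf_zero_mem_notMem {B : ℕ → Closeds Xspace}
    (hBfin : ∀ m, (B m : Set Xspace).Finite) (hBpt : ∀ m, (B m : Set Xspace) ⊆ pt '' Ici m) :
    ∃ W : Set (Closeds Xspace), IsOpen W ∧ {A | zero ∈ A} ⊆ W ∧ ∀ m, B m ∉ W := by
  let C : Xspace → Set Xspace := fun x => ⋃ m ∈ {m | x ∈ B m}, (B m : Set Xspace)
  have hCfin : ∀ x, (C x).Finite := fun x =>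
    ((finite_setOf_mem_image_Ici x).subset fun m hm => hBpt m hm).biUnion fun m _ => hBfin m
  refine ⟨{A | ∀ x ∈ A, (A : Set Xspace) ⊆ C x}ᶜ,
    (Closeds.isClosed_setOf_forall_subset hCfin).isOpen_compl, fun A hA hAC => ?_,
    fun m hm => hm fun x hx => subset_biUnion_of_mem (u := fun m => (B m : Set Xspace)) hx⟩
  obtain ⟨m, -, hzero⟩ := mem_iUnion₂.mp (hAC zero hA hA)
  obtain ⟨n, -, hn⟩ := hBpt m hzero
  exact pt_ne_zero n hn

theorem not_locallyCompactSpace_closeds : ¬ LocallyCompactSpace (Closeds Xspace) := by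
  intro
  have hzero : ({zero} : Closeds Xspace) ∈
      {A : Closeds Xspace | ((A : Set Xspace) ∩ univ).Nonempty} :=
    ⟨zero, rfl, trivial⟩
  obtain ⟨K, hK, hKne, hKc⟩ :=
    local_compact_nhds ((Closeds.isOpen_setOf_inter_nonempty isOpen_univ).mem_nhds hzero)
  have hB : ∀ m, ∃ B ∈ interior K, (B : Set Xspace).Finite ∧ ↑B ⊆ pt '' Ici m := fun m =>
    Closeds.exists_finite_mem_of_closure_mem isOpen_interior
      (IsScott.isUpperSet_of_isOpen (D := univ) isOpen_interior
        (singleton_subset_iff.mpr (mem_closure_of_tendsto tendsto_pt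
          ((eventually_ge_atTop m).mono fun n hn => mem_image_of_mem pt hn)))
        (mem_interior_iff_mem_nhds.mpr hK))
  choose B hBK hBfin hBpt using hB
  obtain ⟨W, hW, hzW, hBW⟩ := exists_isOpen_superset_setOf_zero_mem_notMem hBfin hBpt
  let V : ℕ → Set (Closeds Xspace) := fun M =>
    W ∪ {A | ((A : Set Xspace) ∩ pt '' Iio M).Nonempty}
  have hKV : K ⊆ ⋃ M, V M := by
    intro A hA
    obtain ⟨x, hxA, -⟩ := hKne hA
    rcases eq_zero_or_eq_pt x with rfl | ⟨n, rfl⟩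
    · exact mem_iUnion.mpr ⟨0, .inl (hzW hxA)⟩
    · exact mem_iUnion.mpr
        ⟨n + 1, .inr ⟨pt n, hxA, mem_image_of_mem pt (Nat.lt_succ_self n)⟩⟩
  have hVmono : Monotone V := fun M N hMN =>
    union_subset_union_right _ fun _ ⟨x, hxA, hxM⟩ =>
      ⟨x, hxA, image_mono (Iio_subset_Iio hMN) hxM⟩
  obtain ⟨M, hM⟩ := hKc.elim_directed_cover V
    (fun M => hW.union (Closeds.isOpen_setOf_inter_nonempty (isOpen_image_pt _))) hKV
    hVmono.directed_le
  rcases hM (interior_subset (hBK M)) with h | ⟨x, hxB, hxM⟩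
  · exact hBW M h
  · obtain ⟨n, hn, rfl⟩ := hBpt M hxB
    exact (pt_injective.mem_set_image.mp hxM).not_ge (mem_Ici.mp hn)

end Scott

theorem scott_ne_lowerVietoris : scott (Closeds Xspace) univ ≠ lowerVietoris Xspace := by
  let _ := scott (Closeds Xspace) univ
  have : IsScott (Closeds Xspace) univ := ⟨rfl⟩
  intro h
  obtain ⟨W, hW, hzW, hptW⟩ := exists_isOpen_superset_setOf_zero_mem_notMem
    (B := fun m => {pt m}) (fun _ => finite_singleton _)
    fun _ => singleton_subset_iff.mpr (mem_image_of_mem _ self_mem_Ici)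
  have hWnhds : W ∈ @nhds _ (lowerVietoris Xspace) {zero} := h ▸ hW.mem_nhds (hzW rfl)
  obtain ⟨n, hn⟩ := ((tendsto_lowerVietoris_singleton tendsto_pt).eventually hWnhds).exists
  exact hptW n hn

end Xspace

/-- For `X = {0} ∪ {1/n : n ≥ 1} ⊆ ℝ` with the subspace topology, the lattice `C(X)` of closed
subsets of `X` equipped with the Scott topology is sober, but not locally compact; in particular
the Scott topology on `C(X)` differs from the lower Vietoris topology. -/
theorem closeds_of_one_over_n_scott_sober_not_locallyCompact :
    (@T0Space (TopologicalSpace.Closeds Xspace)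
        (Topology.scott (TopologicalSpace.Closeds Xspace) Set.univ) ∧
      @QuasiSober (TopologicalSpace.Closeds Xspace)
        (Topology.scott (TopologicalSpace.Closeds Xspace) Set.univ)) ∧
    ¬ @LocallyCompactSpace (TopologicalSpace.Closeds Xspace)
        (Topology.scott (TopologicalSpace.Closeds Xspace) Set.univ) ∧
    Topology.scott (TopologicalSpace.Closeds Xspace) Set.univ ≠ lowerVietoris Xspace := by
  let _ := scott (Closeds Xspace) univ
  have : IsScott (Closeds Xspace) univ := ⟨rfl⟩
  exact ⟨⟨inferInstance, Xspace.quasiSober_closeds⟩, Xspace.not_locallyCompactSpace_closeds,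
    Xspace.scott_ne_lowerVietoris⟩
end

section
/- Let Y be a T₁ topological space and let C(Y) denote the complete lattice of closed subsets of Y ordered by inclusion. If the Scott topology on C(Y) coincides with the lower Vietoris topology, σ(C(Y)) = υ(C(Y)), then Y carries the discrete topology. -/
/-! The map `z ↦ closure {z}` is always continuous into the lower Vietoris topology, since the
preimage of `◊U` is `U`. In a `T₁` space this map is `z ↦ {z}`, and the closed sets that are
subsingletons avoiding `y` form a Scott closed family: a directed union of subsingletons is a
subsingleton, hence already closed. If the two topologies agree, the preimage of the complement
of this family, which is `{y}`, is therefore open. -/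

open Topology TopologicalSpace Set

lemma DirectedOn.subsingleton_sUnion {α : Type*} {S : Set (Set α)} (hS : DirectedOn (· ⊆ ·) S)
    (h : ∀ s ∈ S, s.Subsingleton) : (⋃₀ S).Subsingleton := by
  rintro p ⟨s, hs, hps⟩ q ⟨t, ht, hqt⟩
  obtain ⟨u, hu, hsu, htu⟩ := hS s hs t ht
  exact h u hu (hsu hps) (htu hqt)

lemma continuous_closure_singleton_lowerVietoris (X : Type*) [TopologicalSpace X] :
    Continuous[_, lowerVietoris X] fun z : X => Closeds.closure {z} := by
  refine continuous_generateFrom_iff.2 ?_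
  rintro _ ⟨U, hU, rfl⟩
  convert hU using 1
  ext z
  simp [closure_inter_open_nonempty_iff hU]

lemma isClosed_scott_subsingleton_notMem {X : Type*} [TopologicalSpace X] [T1Space X] (y : X) :
    IsClosed[scott (Closeds X) univ] {A : Closeds X | (A : Set X).Subsingleton ∧ y ∉ A} := by
  let := scott (Closeds X) univ
  have : IsScott (Closeds X) univ := ⟨rfl⟩
  refine IsScott.isClosed_iff_isLowerSet_and_dirSupClosed.2
    ⟨fun A B hBA hA => ⟨hA.1.anti hBA, fun hy => hA.2 (hBA hy)⟩, ?_⟩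
  intro d hd _ hdir a ha
  have hunion : (⋃₀ ((↑) '' d : Set (Set X))).Subsingleton :=
    (hdir.mono_comp (g := SetLike.coe) fun _ _ h => h).subsingleton_sUnion (by
      rintro _ ⟨A, hA, rfl⟩
      exact (hd hA).1)
  have hsup : ((sSup d : Closeds X) : Set X) = ⋃₀ ((↑) '' d) := by
    rw [Closeds.coe_sSup, hunion.closure_eq]
  rw [ha.unique (isLUB_sSup d)]
  refine ⟨hsup ▸ hunion, fun hy => ?_⟩
  rw [← SetLike.mem_coe, hsup] at hy
  obtain ⟨_, ⟨A, hA, rfl⟩, hyA⟩ := hy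
  exact (hd hA).2 hyA

/-- If `Y` is a `T₁` space such that on the lattice `C(Y)` of closed subsets of `Y` the Scott
topology coincides with the lower Vietoris topology, then `Y` is discrete. -/
theorem discrete_of_t1_scott_eq_lowerVietoris
    {Y : Type*} [TopologicalSpace Y] [T1Space Y]
    (h : Topology.scott (TopologicalSpace.Closeds Y) Set.univ = lowerVietoris Y) :
    DiscreteTopology Y := by
  refine discreteTopology_iff_isOpen_singleton.2 fun y => ?_
  have hopen : IsOpen[lowerVietoris Y] {A : Closeds Y | (A : Set Y).Subsingleton ∧ y ∉ A}ᶜ :=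
    h ▸ (isClosed_scott_subsingleton_notMem y).isOpen_compl
  convert (continuous_closure_singleton_lowerVietoris Y).isOpen_preimage _ hopen using 1
  ext z
  simp [eq_comm]
end

section
/- Let P be a poset. Then P is an algebraic poset if and only if the complete lattice Γ(P) of Scott closed subsets of P (ordered by inclusion) is an algebraic lattice. -/
/-!
If `k` is compact in `P` then `↑k` is Scott open, so `↓k` lies below a member of any family of
Scott closed sets whose join contains it; hence `↓k` is compact in `Γ(P)`. Conversely a compact
`Q ∈ Γ(P)` is `↓F` for a finite `F ⊆ Q`, and every maximal `f ∈ F` is compact in `P`: if `f ≤ ⋁ D`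
for a directed `D`, then `Q` lies below the directed join of the sets `↓d ∪ ↓(F \ {f})`, `d ∈ D`,
hence below one of them, and maximality forces `f ≤ d`. So every point of a compact element of
`Γ(P)` lies below a compact point of `P` inside it, and in both directions algebraicity reduces to
comparing `↓x` with the join of the compact elements below it.
-/

open Topology TopologicalSpace Set

/-- A poset is algebraic if for every `x` the set `↓x ∩ K(α)` of compact elements below `x`
is directed (in particular nonempty) with least upper bound `x`, where
`K(α) = {k | k ≪ k}`. -/
def AlgebraicPoset (α : Type*) [Preorder α] : Prop :=
  ∀ x : α, (Set.Iic x ∩ {k : α | WayBelow k k}).Nonempty ∧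
    DirectedOn (· ≤ ·) (Set.Iic x ∩ {k : α | WayBelow k k}) ∧
    IsLUB (Set.Iic x ∩ {k : α | WayBelow k k}) x

open CompleteLattice

theorem wayBelow_self_iff_isCompactElement {α : Type*} [PartialOrder α] {k : α} :
    WayBelow k k ↔ IsCompactElement k :=
  ⟨fun h s u hs hdir hu hk => h s hs hdir u hu hk, fun h d hd hdir a ha hk => h d a hd hdir ha hk⟩

theorem algebraicPoset_iff_isCompactlyGenerated {α : Type*} [CompleteLattice α] :
    AlgebraicPoset α ↔ IsCompactlyGenerated α := by
  simp only [AlgebraicPoset, wayBelow_self_iff_isCompactElement]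
  refine ⟨fun h => ⟨fun x => ⟨_, fun k hk => hk.2, (h x).2.2.sSup_eq⟩⟩, fun _ x => ?_⟩
  refine ⟨⟨⊥, bot_le, by simpa using isCompactElement_finsetSup (f := id) ∅ (by simp)⟩, ?_, ?_⟩
  · rintro a ⟨hax, ha : IsCompactElement a⟩ b ⟨hbx, hb : IsCompactElement b⟩
    classical
    have hab : IsCompactElement (a ⊔ b) := by
      simpa using isCompactElement_finsetSup (f := id) {a, b} (by simp [ha, hb])
    exact ⟨a ⊔ b, ⟨sup_le hax hbx, hab⟩, le_sup_left, le_sup_right⟩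
  · have h := _root_.isLUB_sSup {c : α | IsCompactElement c ∧ c ≤ x}
    rwa [sSup_compact_le_eq, ofPred_and, inter_comm] at h

def TopologicalSpace.Closeds.Iic {P : Type*} [Preorder P] [TopologicalSpace P]
    [ClosedIicTopology P] (x : P) : Closeds P :=
  ⟨Set.Iic x, isClosed_Iic⟩

namespace Topology.IsScott

variable {P : Type*} [PartialOrder P] [TopologicalSpace P] [IsScott P univ]

theorem isOpen_Ici_of_isCompactElement {k : P} (hk : IsCompactElement k) : IsOpen (Ici k) := by
  rw [isOpen_iff_isUpperSet_and_dirSupInaccOn (D := univ), dirSupInaccOn_univ]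
  exact ⟨isUpperSet_Ici k, fun d hd hdir a ha hka => hk d a hd hdir ha hka⟩

theorem isCompactElement_closedsIic {k : P} (hk : IsCompactElement k) :
    IsCompactElement (Closeds.Iic k) := by
  rw [isCompactElement_iff_le_of_directed_sSup_le]
  intro s _ _ hks
  have hk_mem : k ∈ closure (⋃₀ ((↑) '' s)) := hks le_rfl
  obtain ⟨y, hky, _, ⟨C, hC, rfl⟩, hyC⟩ :=
    mem_closure_iff.1 hk_mem (Ici k) (isOpen_Ici_of_isCompactElement hk) le_rfl
  exact ⟨C, hC, fun z hz => isLowerSet_of_isClosed C.isClosed (hz.trans hky) hyC⟩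

theorem isCompactlyGenerated_closeds_of_algebraicPoset (h : AlgebraicPoset P) :
    IsCompactlyGenerated (Closeds P) := by
  refine ⟨fun C => ⟨Closeds.Iic '' {k | k ∈ C ∧ IsCompactElement k}, ?_, ?_⟩⟩
  · rintro _ ⟨k, ⟨-, hk⟩, rfl⟩
    exact isCompactElement_closedsIic hk
  refine le_antisymm (sSup_le ?_) fun x hx => ?_
  · rintro _ ⟨k, ⟨hkC, -⟩, rfl⟩ y hy
    exact isLowerSet_of_isClosed C.isClosed hy hkC
  obtain ⟨hne, hdir, hlub⟩ := h x
  refine dirSupClosed_of_isClosed (sSup _ : Closeds P).isClosed ?_ hne hdir hlub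
  rintro k ⟨hkx, hk⟩
  have hkC : k ∈ C := isLowerSet_of_isClosed C.isClosed hkx hx
  have hIic_mem : Closeds.Iic k ∈ Closeds.Iic '' {k | k ∈ C ∧ IsCompactElement k} :=
    mem_image_of_mem _ ⟨hkC, wayBelow_self_iff_isCompactElement.1 hk⟩
  exact le_sSup hIic_mem (le_refl k)

theorem exists_finite_subset_biUnion_Iic_of_isCompactElement {Q : Closeds P}
    (hQ : IsCompactElement Q) :
    ∃ F : Set P, F.Finite ∧ F ⊆ Q ∧ (Q : Set P) ⊆ ⋃ f ∈ F, Set.Iic f := by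
  have hQ_le : Q ≤ ⨆ y : Q, Closeds.Iic (y : P) := fun y hy =>
    le_iSup (fun y : Q => Closeds.Iic (y : P)) ⟨y, hy⟩ (le_refl y)
  obtain ⟨s, hs⟩ := hQ.exists_finset_of_le_iSup _ (fun y : Q => Closeds.Iic (y : P)) hQ_le
  have hF : (Subtype.val '' (s : Set Q)).Finite := s.finite_toSet.image _
  have hF_closed : IsClosed (⋃ f ∈ Subtype.val '' (s : Set Q), Set.Iic f) :=
    hF.isClosed_biUnion fun _ _ => isClosed_Iic
  refine ⟨_, hF, image_subset_iff.2 fun y _ => y.2, ?_⟩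
  refine (hs.trans (iSup₂_le fun y hy => ?_) : Q ≤ ⟨_, hF_closed⟩)
  exact fun z hz => mem_biUnion (mem_image_of_mem _ hy) hz

theorem isCompactElement_of_subset_Iic_union {Q : Closeds P} (hQ : IsCompactElement Q) {f : P}
    (hf : f ∈ Q) {R : Set P} (hR : IsClosed R) (hfR : f ∉ R) (hQR : (Q : Set P) ⊆ Set.Iic f ∪ R) :
    IsCompactElement f := by
  intro d a hd hdir ha hfa
  let e : P → Closeds P := fun z => Closeds.Iic z ⊔ ⟨R, hR⟩
  have he_mono : Monotone e := fun z w hzw => sup_le_sup_right (Iic_subset_Iic.2 hzw) _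
  have ha_mem : a ∈ sSup (e '' d) :=
    dirSupClosed_of_isClosed (sSup _ : Closeds P).isClosed
      (fun z hz => le_sSup (mem_image_of_mem e hz) (Or.inl le_rfl)) hd hdir ha
  have hQ_le : Q ≤ sSup (e '' d) := by
    intro y hy
    rcases hQR hy with hyf | hyR
    · exact isLowerSet_of_isClosed (sSup _ : Closeds P).isClosed (hyf.trans hfa) ha_mem
    · exact le_sSup (mem_image_of_mem e hd.some_mem) (Or.inr hyR)
  obtain ⟨_, ⟨z, hz, rfl⟩, hQz⟩ := (isCompactElement_iff_le_of_directed_sSup_le _ _).1 hQ (e '' d)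
    (hd.image e) (hdir.mono_comp fun _ _ h => he_mono h) hQ_le
  exact ⟨z, hz, (hQz hf).resolve_right hfR⟩

theorem exists_isCompactElement_ge_of_mem {Q : Closeds P} (hQ : IsCompactElement Q) {y : P}
    (hy : y ∈ Q) : ∃ k ∈ Q, IsCompactElement k ∧ y ≤ k := by
  obtain ⟨F, hF, hFQ, hQF⟩ := exists_finite_subset_biUnion_Iic_of_isCompactElement hQ
  obtain ⟨g, hgF, hyg⟩ := mem_iUnion₂.1 (hQF hy)
  obtain ⟨f, hgf, hf_max⟩ := hF.exists_le_maximal hgF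
  refine ⟨f, hFQ hf_max.prop, ?_, hyg.trans hgf⟩
  refine isCompactElement_of_subset_Iic_union (R := ⋃ g ∈ F \ {f}, Set.Iic g) hQ
    (hFQ hf_max.prop) (hF.sdiff.isClosed_biUnion fun _ _ => isClosed_Iic) ?_ fun z hz => ?_
  · simp only [mem_iUnion₂, mem_Iic, not_exists]
    exact fun g' hg' hfg' => hg'.2 (hf_max.eq_of_le hg'.1 hfg').symm
  · obtain ⟨g', hg'F, hzg'⟩ := mem_iUnion₂.1 (hQF hz)
    by_cases hg'f : g' = f
    · exact Or.inl (hg'f ▸ hzg')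
    · exact Or.inr (mem_biUnion ⟨hg'F, hg'f⟩ hzg')

theorem mem_of_forall_isCompactElement_le_mem [IsCompactlyGenerated (Closeds P)] {C : Closeds P}
    {x : P} (h : ∀ k ≤ x, IsCompactElement k → k ∈ C) : x ∈ C := by
  suffices Closeds.Iic x ≤ C from this (le_refl x)
  rw [← sSup_compact_le_eq (Closeds.Iic x)]
  refine sSup_le ?_
  rintro Q ⟨hQ, hQx⟩ y hy
  obtain ⟨k, hkQ, hk, hyk⟩ := exists_isCompactElement_ge_of_mem hQ hy
  exact isLowerSet_of_isClosed C.isClosed hyk (h k (hQx hkQ) hk)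

theorem algebraicPoset_of_isCompactlyGenerated_closeds [IsCompactlyGenerated (Closeds P)] :
    AlgebraicPoset P := by
  intro x
  simp only [wayBelow_self_iff_isCompactElement]
  refine ⟨?_, ?_, fun k hk => hk.1, fun u hu => ?_⟩
  · by_contra hempty
    exact mem_of_forall_isCompactElement_le_mem (C := ⊥) fun k hkx hk => hempty ⟨k, hkx, hk⟩
  · rintro k₁ ⟨hk₁x, hk₁ : IsCompactElement k₁⟩ k₂ ⟨hk₂x, hk₂ : IsCompactElement k₂⟩
    by_contra hnone
    have hU : IsOpen (Ici k₁ ∩ Ici k₂) :=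
      (isOpen_Ici_of_isCompactElement hk₁).inter (isOpen_Ici_of_isCompactElement hk₂)
    let C : Closeds P := ⟨Set.Iic x ∩ (Ici k₁ ∩ Ici k₂)ᶜ, isClosed_Iic.inter hU.isClosed_compl⟩
    have hxC : x ∈ C := mem_of_forall_isCompactElement_le_mem fun k hkx hk =>
      ⟨hkx, fun ⟨h₁, h₂⟩ => hnone ⟨k, ⟨hkx, hk⟩, h₁, h₂⟩⟩
    exact hxC.2 ⟨hk₁x, hk₂x⟩
  · exact mem_of_forall_isCompactElement_le_mem (C := Closeds.Iic u) fun k hkx hk => hu ⟨hkx, hk⟩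

end Topology.IsScott

/-- A poset `P` is algebraic iff the complete lattice `Γ(P)` of Scott closed subsets of `P`
is an algebraic lattice. -/
theorem algebraicPoset_iff_algebraic_closeds
    {P : Type*} [PartialOrder P] [TopologicalSpace P] [Topology.IsScott P Set.univ] :
    AlgebraicPoset P ↔ AlgebraicPoset (TopologicalSpace.Closeds P) := by
  rw [algebraicPoset_iff_isCompactlyGenerated]
  exact ⟨IsScott.isCompactlyGenerated_closeds_of_algebraicPoset,
    fun _ => IsScott.algebraicPoset_of_isCompactlyGenerated_closeds⟩
end

section
/- Let P be a complete lattice such that (P, σ(P)) is not core-compact, and let L be the complete lattice P × σ(P) (product order, with σ(P) the lattice of Scott open subsets of P ordered by inclusion). Then L is not jointly Scott continuous, i.e., the supremum map (x, y) ↦ x ∨ y from (L, σ(L)) × (L, σ(L)) (product topology) to (L, σ(L)) is not continuous; consequently the Scott topology on L × L is strictly finer than the product of the Scott topologies: Σ(L × L) ≠ ΣL × ΣL. -/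
open Topology TopologicalSpace Set

/-- A topological space is core-compact if its lattice of open subsets is a continuous
lattice. -/
def CoreCompact (X : Type*) [TopologicalSpace X] : Prop :=
  ContinuousPoset (TopologicalSpace.Opens X)

/-!
In `L = P × σ(P)` the membership set `{(x, U) | x ∈ U}` is Scott open. If `⊔ : ΣL × ΣL → ΣL`
were continuous, then for `x ∈ U` the point `((x, ⊥), (⊥, U))` would have a basic neighbourhood
`u × v` mapped into that set. The slices `V = {y | (y, ⊥) ∈ u}` and `𝒪 = {W | (⊥, W) ∈ v}` are
Scott open, `U ∈ 𝒪`, and `V ⊆ W` for every `W ∈ 𝒪`, so `x ∈ V ≪ U`: every open set is the union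
of the open sets way below it, i.e. `P` is core-compact. Since `⊔` is Scott continuous, it is
continuous for `Σ(L × L)`, which therefore differs from `ΣL × ΣL`.
-/

section WayBelow

variable {α : Type*}

lemma WayBelow.le_s16 [Preorder α] {x y : α} (h : WayBelow x y) : x ≤ y := by
  obtain ⟨z, hz, hxz⟩ := h {y} (singleton_nonempty y) (directedOn_singleton y) y
    isLUB_singleton le_rfl
  rwa [mem_singleton_iff.mp hz] at hxz

lemma wayBelow_bot [Preorder α] [OrderBot α] (y : α) : WayBelow ⊥ y :=
  fun _ ⟨z, hz⟩ _ _ _ _ => ⟨z, hz, bot_le⟩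

lemma WayBelow.sup [SemilatticeSup α] {x₁ x₂ y : α} (h₁ : WayBelow x₁ y) (h₂ : WayBelow x₂ y) :
    WayBelow (x₁ ⊔ x₂) y := by
  intro d hne hdir a hlub hya
  obtain ⟨z₁, hz₁, hxz₁⟩ := h₁ d hne hdir a hlub hya
  obtain ⟨z₂, hz₂, hxz₂⟩ := h₂ d hne hdir a hlub hya
  obtain ⟨z, hz, hz₁z, hz₂z⟩ := hdir z₁ hz₁ z₂ hz₂
  exact ⟨z, hz, sup_le (hxz₁.trans hz₁z) (hxz₂.trans hz₂z)⟩

lemma wayBelow_of_isOpen_scott [Preorder α] {x y : α} {O : Set α}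
    (hO : IsOpen[scott α univ] O) (hyO : y ∈ O) (hxO : ∀ z ∈ O, x ≤ z) : WayBelow x y := by
  let := scott α univ
  have : IsScott α univ := ⟨rfl⟩
  have ⟨hup, hinacc⟩ := (IsScott.isOpen_iff_isUpperSet_and_dirSupInaccOn (D := univ)).mp hO
  intro d hne hdir a hlub hya
  obtain ⟨z, hzd, hzO⟩ := hinacc trivial hne hdir hlub (hup hya hyO)
  exact ⟨z, hzd, hxO z hzO⟩

lemma continuousPoset_of_le_sSup_wayBelow [CompleteLattice α]
    (h : ∀ y : α, y ≤ sSup {x | WayBelow x y}) : ContinuousPoset α :=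
  fun y => ⟨⟨⊥, wayBelow_bot y⟩, fun _ h₁ _ h₂ => ⟨_, h₁.sup h₂, le_sup_left, le_sup_right⟩,
    fun _ hx => hx.le_s16, fun _ hb => (h y).trans (sSup_le hb)⟩

end WayBelow

lemma coreCompact_of_forall_exists_wayBelow {X : Type*} [TopologicalSpace X]
    (h : ∀ U : Opens X, ∀ x ∈ U, ∃ V : Opens X, x ∈ V ∧ WayBelow V U) : CoreCompact X :=
  continuousPoset_of_le_sSup_wayBelow fun U x hxU =>
    let ⟨V, hxV, hVU⟩ := h U x hxU
    Opens.mem_sSup.mpr ⟨V, hVU, hxV⟩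

lemma ScottContinuous.continuous {α β : Type*} [Preorder α] [Preorder β]
    [TopologicalSpace α] [IsScott α univ] [TopologicalSpace β] [IsScott β univ] {f : α → β}
    (hf : ScottContinuous f) : Continuous f :=
  (IsScott.scottContinuousOn_iff_continuous fun _ _ _ => mem_univ _).mp hf.scottContinuousOn

lemma continuous_scott_sup {α : Type*} [SemilatticeSup α] :
    Continuous[scott (α × α) univ, scott α univ] fun q : α × α => q.1 ⊔ q.2 := by
  let := scott α univ
  let := scott (α × α) univ
  have : IsScott α univ := ⟨rfl⟩
  have : IsScott (α × α) univ := ⟨rfl⟩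
  exact ScottContinuous.sup₂.continuous

lemma scottContinuous_mem_opens {X : Type*} [TopologicalSpace X] (x : X) :
    ScottContinuous fun U : Opens X => x ∈ U :=
  ScottContinuous.of_map_sSup fun d _ _ => by simp [Opens.mem_sSup, sSup_image]

lemma isOpen_scott_setOf_fst_mem_snd {P : Type*} [Preorder P] [TopologicalSpace P]
    [IsScott P univ] : IsOpen[scott (P × Opens P) univ] {p | p.1 ∈ p.2} := by
  let := scott (P × Opens P) univ
  have : IsScott (P × Opens P) univ := ⟨rfl⟩
  exact IsScott.isOpen_iff_scottContinuous_mem.mpr <| .fromProd scottContinuous_mem_opens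
    fun U => IsScott.isOpen_iff_scottContinuous_mem.mp U.isOpen

lemma coreCompact_of_continuous_sup {P : Type*} [SemilatticeSup P] [OrderBot P]
    [TopologicalSpace P] [IsScott P univ]
    (hc : Continuous[@instTopologicalSpaceProd _ _ (scott (P × Opens P) univ)
      (scott (P × Opens P) univ), scott (P × Opens P) univ]
      fun q : (P × Opens P) × (P × Opens P) => q.1 ⊔ q.2) :
    CoreCompact P := by
  let := scott (P × Opens P) univ
  have : IsScott (P × Opens P) univ := ⟨rfl⟩
  refine coreCompact_of_forall_exists_wayBelow fun U x hxU => ?_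
  have hmem : ((x, ⊥), (⊥, U)) ∈ (fun q : (P × Opens P) × (P × Opens P) => q.1 ⊔ q.2) ⁻¹'
      {p | p.1 ∈ p.2} := by simpa using hxU
  obtain ⟨u, v, hu, hv, hxu, hUv, huv⟩ :=
    isOpen_prod_iff.mp (isOpen_scott_setOf_fst_mem_snd.preimage hc) _ _ hmem
  have hV : IsOpen ((·, ⊥) ⁻¹' u : Set P) :=
    hu.preimage (ScottContinuous.id.prodMk (.const ⊥)).continuous
  have hO : IsOpen[scott (Opens P) univ] ((⊥, ·) ⁻¹' v) := by
    let := scott (Opens P) univ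
    have : IsScott (Opens P) univ := ⟨rfl⟩
    exact hv.preimage ((ScottContinuous.const ⊥).prodMk .id).continuous
  refine ⟨⟨_, hV⟩, hxu, wayBelow_of_isOpen_scott hO hUv fun W hW y hy => ?_⟩
  simpa using huv (mk_mem_prod hy hW)

/-- Let `P` be a complete lattice such that `(P, σ(P))` is not core-compact, and let
`L = P × σ(P)` be the product of `P` with its lattice of Scott open sets. Then the supremum
map `(x, y) ↦ x ⊔ y : ΣL × ΣL → ΣL` is not continuous (i.e. `L` is not jointly Scott
continuous); consequently the Scott topology on `L × L` differs from the product of the Scott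
topologies. -/
theorem not_jointly_scottContinuous_of_not_coreCompact
    {P : Type*} [CompleteLattice P] [TopologicalSpace P] [Topology.IsScott P Set.univ]
    (h : ¬ CoreCompact P) :
    (¬ @Continuous ((P × TopologicalSpace.Opens P) × (P × TopologicalSpace.Opens P))
        (P × TopologicalSpace.Opens P)
        (@instTopologicalSpaceProd _ _
          (Topology.scott (P × TopologicalSpace.Opens P) Set.univ)
          (Topology.scott (P × TopologicalSpace.Opens P) Set.univ))
        (Topology.scott (P × TopologicalSpace.Opens P) Set.univ)
        (fun q => q.1 ⊔ q.2)) ∧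
    Topology.scott ((P × TopologicalSpace.Opens P) × (P × TopologicalSpace.Opens P)) Set.univ ≠
      @instTopologicalSpaceProd _ _
        (Topology.scott (P × TopologicalSpace.Opens P) Set.univ)
        (Topology.scott (P × TopologicalSpace.Opens P) Set.univ) := by
  have hsup := fun hc => h (coreCompact_of_continuous_sup hc)
  exact ⟨hsup, fun heq => hsup (heq ▸ continuous_scott_sup)⟩
end
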